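/- Let (E,ℒ) be a labeled graph satisfying the standing assumptions with ℰ the smallest normal accommodating set, and let B ∈ ℰ be minimal. If B does not connect to any loop, then r(B,β) ∩ B = ∅ for every β ∈ ℒ*(E); moreover, every minimal B′ ∈ ℰ with B′ ⊆ r(B,δ) for some δ ∈ ℒ*(E) also does not connect to any loop. -/

import Mathlib

/-! If `r(B, β)` met `B`, minimality of `B` would give `B ⊆ r(B, β)`, making `(β, B)` a loop that
`B` connects to. For the second part, a loop covered by `r(B', δᵢ)` with `B' ⊆ r(B, δ)` is
covered by the `r(B, δ δᵢ)`, and prepending `δ` keeps the `δᵢ` prefix-free. -/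

/-- The `n`-fold concatenation (power) `w^n` of a finite word `w`. -/
def wpow {Λ : Type*} (w : List Λ) (n : ℕ) : List Λ := (List.replicate n w).flatten

/-- The finite word `x_{[1,n]}` formed by the first `n` letters of an infinite word `x`. -/
def wordPrefix {Λ : Type*} (x : ℕ → Λ) (n : ℕ) : List Λ := (List.range n).map x

/-- A labeled graph `(E, ℒ)`: a directed graph with vertex set `V` and edge type `Edge`
(with range and source maps), together with a surjective labeling map `lbl` onto the
alphabet `Λ`. -/
structure LabeledGraph (V : Type*) (Λ : Type*) where
  Edge : Type*
  src : Edge → V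
  rng : Edge → V
  lbl : Edge → Λ
  lbl_surjective : Function.Surjective lbl

namespace LabeledGraph

variable {V : Type*} {Λ : Type*}

/-- `G.PathLabel u w α` holds iff there is a finite path `λ` of length `≥ 1` in the graph
with source `u`, range `w` and label word `ℒ(λ) = α`. -/
inductive PathLabel (G : LabeledGraph V Λ) : V → V → List Λ → Prop
  | single (e : G.Edge) : PathLabel G (G.src e) (G.rng e) [G.lbl e]
  | cons (e : G.Edge) {w : V} {α : List Λ} :
      PathLabel G (G.rng e) w α → PathLabel G (G.src e) w (G.lbl e :: α)

variable (G : LabeledGraph V Λ)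

/-- `α ∈ ℒ*(E)`: `α` is the label of some path of length `≥ 1`. -/
def IsLabel (α : List Λ) : Prop := ∃ u w, G.PathLabel u w α

/-- The relative range `r(A, α)` of `α` with respect to `A`. -/
def rel (A : Set V) (α : List Λ) : Set V := {w | ∃ u ∈ A, G.PathLabel u w α}

/-- `r(α) = r(E⁰, α)`. -/
def range' (α : List Λ) : Set V := G.rel Set.univ α

/-- `s(α)`: the set of sources of paths labeled `α`. -/
def srcSet (α : List Λ) : Set V := {u | ∃ w, G.PathLabel u w α}

/-- `ℒ(AEⁿ)`: labels of paths of length `n` with source in `A`. -/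
def lblFrom (A : Set V) (n : ℕ) : Set (List Λ) :=
  {α | α.length = n ∧ ∃ u ∈ A, ∃ w, G.PathLabel u w α}

/-- `ℒ(AE^{≥1})`: labels of paths of length `≥ 1` with source in `A`. -/
def lblFromGe (A : Set V) : Set (List Λ) := {α | ∃ u ∈ A, ∃ w, G.PathLabel u w α}

/-- `ℒ(EⁿA)`: labels of paths of length `n` with range in `A`. -/
def lblTo (A : Set V) (n : ℕ) : Set (List Λ) :=
  {α | α.length = n ∧ ∃ u, ∃ w ∈ A, G.PathLabel u w α}

/-- The generalized vertex `[v]_l`: the set of vertices `w` receiving at least one edge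
such that `ℒ(E^k w) = ℒ(E^k v)` for all `1 ≤ k ≤ l`. -/
def gv (v : V) (l : ℕ) : Set V :=
  {w | (∃ e : G.Edge, G.rng e = w) ∧
    ∀ k : ℕ, 1 ≤ k → k ≤ l → G.lblTo {w} k = G.lblTo {v} k}

/-- Membership in `ℰ`, the smallest collection of subsets of `E⁰` containing all ranges
`r(α)` and closed under relative ranges, finite intersections, finite unions and
relative complements (the smallest normal accommodating set). -/
inductive memE : Set V → Prop
  | empty : memE ∅
  | range (α : List Λ) : α ≠ [] → memE (G.range' α)
  | relRange {A : Set V} (α : List Λ) : α ≠ [] → memE A → memE (G.rel A α)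
  | inter {A C : Set V} : memE A → memE C → memE (A ∩ C)
  | union {A C : Set V} : memE A → memE C → memE (A ∪ C)
  | diff {A C : Set V} : memE A → memE C → memE (A \ C)

/-- The standing assumptions on the labeled space `(E, ℒ, ℰ)`: the graph has no sinks and
the labeled space is weakly left-resolving, set-finite and receiver set-finite. -/
structure Standing : Prop where
  no_sinks : ∀ u : V, ∃ e : G.Edge, G.src e = u
  weakly_left_resolving : ∀ A C : Set V, G.memE A → G.memE C →
    ∀ α : List Λ, α ≠ [] → G.rel (A ∩ C) α = G.rel A α ∩ G.rel C α
  set_finite : ∀ A : Set V, G.memE A → ∀ k : ℕ, 1 ≤ k → (G.lblFrom A k).Finite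
  receiver_set_finite : ∀ A : Set V, G.memE A → ∀ k : ℕ, 1 ≤ k → (G.lblTo A k).Finite

/-- `α` is agreeable for `[v]_l` (the condition only depends on `l`):
`α = βα' = α'γ` with `α', β, γ ∈ ℒ*(E)` and `|β| = |γ| ≤ l`. -/
def Agreeable (l : ℕ) (α : List Λ) : Prop :=
  ∃ α' β γ : List Λ, G.IsLabel α' ∧ G.IsLabel β ∧ G.IsLabel γ ∧
    β.length = γ.length ∧ β.length ≤ l ∧ α = β ++ α' ∧ α = α' ++ γ

/-- `α` (a path with `s(α) ∩ [v]_l ≠ ∅`) is disagreeable for `[v]_l`. -/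
def DisagreeableFor (v : V) (l : ℕ) (α : List Λ) : Prop :=
  (G.srcSet α ∩ G.gv v l).Nonempty ∧ ¬ G.Agreeable l α

/-- The generalized vertex `[v]_l` is disagreeable: there is `N ≥ 1` such that for every
`n > N` there is a path in `ℒ(E^{≥n})` which is disagreeable for `[v]_l`. -/
def DisagreeableGV (v : V) (l : ℕ) : Prop :=
  ∃ N : ℕ, 1 ≤ N ∧ ∀ n : ℕ, N < n →
    ∃ α : List Λ, n ≤ α.length ∧ G.DisagreeableFor v l α

/-- The labeled space `(E, ℒ, ℰ)` is disagreeable. -/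
def Disagreeable : Prop :=
  ∀ v : V, ∃ L : ℕ, 1 ≤ L ∧ ∀ l : ℕ, L ≤ l → G.DisagreeableGV v l

/-- `(α, A)` is a loop: `A ∈ ℰ` is nonempty, `α ∈ ℒ*(E)` and `A ⊆ r(A, α)`. -/
def IsLoop (α : List Λ) (A : Set V) : Prop :=
  α ≠ [] ∧ G.memE A ∧ A.Nonempty ∧ A ⊆ G.rel A α

/-- The loop `(α, A)` has an exit: either (i) there is `β ∈ ℒ(AE^{|α|})` with `β ≠ α` and
`r(A, β) ≠ ∅`, or (ii) `A ⊊ r(A, α)`. -/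
def HasExit (α : List Λ) (A : Set V) : Prop :=
  (∃ β : List Λ, β ∈ G.lblFrom A α.length ∧ β ≠ α ∧ (G.rel A β).Nonempty) ∨
    A ⊂ G.rel A α

/-- `A ∈ ℰ` is minimal: `A ≠ ∅` and `A ∩ C ∈ {A, ∅}` for every `C ∈ ℰ`. -/
def MinimalSet (A : Set V) : Prop :=
  G.memE A ∧ A.Nonempty ∧ ∀ C : Set V, G.memE C → A ∩ C = A ∨ A ∩ C = ∅

/-- A set `Bset ⊆ E⁰` connects to a loop: there are a loop `(α, A)` and finitely many
paths `δ₁, …, δ_m ∈ ℒ*(E)`, none of which is an initial path of another, with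
`A ⊆ ∪ᵢ r(Bset, δᵢ)`. -/
def ConnectsToLoop (Bset : Set V) : Prop :=
  ∃ (α : List Λ) (A : Set V), G.IsLoop α A ∧
    ∃ (m : ℕ) (δ : Fin m → List Λ), (∀ i, G.IsLabel (δ i)) ∧
      (∀ i j, i ≠ j → ¬ (δ i <+: δ j)) ∧ A ⊆ ⋃ i, G.rel Bset (δ i)

/-- Every vertex connects to a loop: every generalized vertex `[v]_l` connects to a loop. -/
def EveryVertexConnectsToLoop : Prop :=
  ∀ (v : V) (l : ℕ), 1 ≤ l → (∃ e : G.Edge, G.rng e = v) →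
    G.ConnectsToLoop (G.gv v l)

/-- The labeled space `(E, ℒ, ℰ)` is strongly cofinal. -/
def StronglyCofinal : Prop :=
  ∀ x : ℕ → Λ, (∀ n : ℕ, 1 ≤ n → G.IsLabel (wordPrefix x n)) →
    ∀ (v : V) (l : ℕ), (∃ e : G.Edge, G.rng e = v) → 1 ≤ l →
      ∃ N : ℕ, 1 ≤ N ∧ ∃ (m : ℕ) (lam : Fin m → List Λ),
        (∀ i, G.IsLabel (lam i)) ∧
        G.range' (wordPrefix x N) ⊆ ⋃ i, G.rel (G.gv v l) (lam i)

/-- A subset `H ⊆ ℰ` is hereditary: it is closed under finite unions, relative ranges,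
and subsets belonging to `ℰ`. -/
def IsHereditary (H : Set (Set V)) : Prop :=
  (∀ A ∈ H, G.memE A) ∧
  (∀ A ∈ H, ∀ C ∈ H, A ∪ C ∈ H) ∧
  (∀ A ∈ H, ∀ β : List Λ, G.IsLabel β → G.rel A β ∈ H) ∧
  (∀ A ∈ H, ∀ C : Set V, G.memE C → C ⊆ A → C ∈ H)

/-- A subset `H ⊆ ℰ` is saturated: every `A ∈ ℰ` with `r(A, β) ∈ H` for all
`β ∈ ℒ*(E)` belongs to `H`. -/
def IsSaturated (H : Set (Set V)) : Prop :=
  ∀ A : Set V, G.memE A → (∀ β : List Λ, G.IsLabel β → G.rel A β ∈ H) → A ∈ H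

end LabeledGraph

namespace LabeledGraph

variable {V : Type*} {Λ : Type*} {G : LabeledGraph V Λ}

theorem PathLabel.ne_nil {u w : V} {α : List Λ} (h : G.PathLabel u w α) : α ≠ [] := by
  cases h <;> simp

theorem PathLabel.append {u w : V} {α : List Λ} (h₁ : G.PathLabel u w α) {v : V}
    {β : List Λ} (h₂ : G.PathLabel w v β) : G.PathLabel u v (α ++ β) := by
  induction h₁ with
  | single e => exact PathLabel.cons e h₂
  | cons e _ ih => exact PathLabel.cons e (ih h₂)

theorem IsLabel.ne_nil {α : List Λ} (h : G.IsLabel α) : α ≠ [] :=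
  let ⟨_, _, hp⟩ := h
  hp.ne_nil

theorem isLabel_of_rel_nonempty {A : Set V} {α : List Λ} (h : (G.rel A α).Nonempty) :
    G.IsLabel α :=
  let ⟨w, u, _, hp⟩ := h
  ⟨u, w, hp⟩

theorem rel_mono {A C : Set V} (h : A ⊆ C) (α : List Λ) : G.rel A α ⊆ G.rel C α :=
  fun _ ⟨u, hu, hp⟩ => ⟨u, h hu, hp⟩

theorem rel_rel_subset_rel_append (A : Set V) (α β : List Λ) :
    G.rel (G.rel A α) β ⊆ G.rel A (α ++ β) :=
  fun _ ⟨_, ⟨x, hx, hpx⟩, hp⟩ => ⟨x, hx, hpx.append hp⟩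

theorem MinimalSet.subset_rel_of_inter_nonempty {B : Set V} {β : List Λ} (hB : G.MinimalSet B)
    (hβ : β ≠ []) (hne : (G.rel B β ∩ B).Nonempty) : B ⊆ G.rel B β := by
  obtain ⟨hBE, -, hmin⟩ := hB
  rcases hmin _ (memE.relRange β hβ hBE) with h | h
  · exact Set.inter_eq_left.mp h
  · rw [Set.inter_comm] at h
    exact absurd h hne.ne_empty

theorem connectsToLoop_of_finite {ι : Type*} [Finite ι] {B A : Set V} {α : List Λ}
    (hloop : G.IsLoop α A) (δ : ι → List Λ) (hlab : ∀ i, G.IsLabel (δ i))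
    (hpref : ∀ i j, i ≠ j → ¬ δ i <+: δ j) (hcov : A ⊆ ⋃ i, G.rel B (δ i)) :
    G.ConnectsToLoop B := by
  obtain ⟨m, ⟨e⟩⟩ := Finite.exists_equiv_fin ι
  refine ⟨α, A, hloop, m, δ ∘ e.symm, fun i => hlab _,
    fun i j hij => hpref _ _ (e.symm.injective.ne hij), hcov.trans ?_⟩
  exact Set.iUnion_subset fun i => Set.subset_iUnion_of_subset (e i) (by simp)

theorem IsLoop.connectsToLoop {A : Set V} {α : List Λ} (h : G.IsLoop α A) :
    G.ConnectsToLoop A := by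
  obtain ⟨-, -, hA, hloop⟩ := id h
  have hlab : G.IsLabel α := isLabel_of_rel_nonempty (hA.mono hloop)
  exact connectsToLoop_of_finite h (fun _ : Unit => α) (fun _ => hlab)
    (fun i j hij => absurd (Subsingleton.elim i j) hij)
    (hloop.trans (Set.subset_iUnion_of_subset () le_rfl))

theorem ConnectsToLoop.of_subset_rel {B B' : Set V} {δ : List Λ} (hsub : B' ⊆ G.rel B δ)
    (h : G.ConnectsToLoop B') : G.ConnectsToLoop B := by
  obtain ⟨α, A, hloop, m, ds, -, hpref, hcov⟩ := h
  have hrel : ∀ i, G.rel B' (ds i) ⊆ G.rel B (δ ++ ds i) := fun i =>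
    (rel_mono hsub (ds i)).trans (rel_rel_subset_rel_append B δ (ds i))
  -- indices with `r(B, δ δᵢ) = ∅` are dropped, since `δ δᵢ` need not be a label
  let ι := {i : Fin m // (G.rel B (δ ++ ds i)).Nonempty}
  refine connectsToLoop_of_finite hloop (fun i : ι => δ ++ ds i)
    (fun i => isLabel_of_rel_nonempty i.2)
    (fun i j hij hpre => hpref _ _ (Subtype.coe_injective.ne hij)
      ((List.prefix_append_right_inj δ).mp hpre)) ?_
  intro x hx
  obtain ⟨_, ⟨i, rfl⟩, hxi⟩ := hcov hx
  exact Set.mem_iUnion.2 ⟨⟨i, x, hrel i hxi⟩, hrel i hxi⟩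

end LabeledGraph

theorem stmt_13_general {V : Type*} {Λ : Type*}
    (G : LabeledGraph V Λ)
    (Bset : Set V) (hB : G.MinimalSet Bset) (hnc : ¬ G.ConnectsToLoop Bset) :
    (∀ β : List Λ, G.IsLabel β → G.rel Bset β ∩ Bset = ∅) ∧
    (∀ (B' : Set V) (δ : List Λ), G.MinimalSet B' → G.IsLabel δ →
      B' ⊆ G.rel Bset δ → ¬ G.ConnectsToLoop B') := by
  refine ⟨fun β hβ => ?_, fun B' δ _ _ hsub hc => hnc (hc.of_subset_rel hsub)⟩
  by_contra hne
  have hloop : G.IsLoop β Bset :=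
    ⟨hβ.ne_nil, hB.1, hB.2.1, hB.subset_rel_of_inter_nonempty hβ.ne_nil
      (Set.nonempty_iff_ne_empty.mpr hne)⟩
  exact hnc hloop.connectsToLoop

/-- Part of the proofs of Theorem 3.10(b) and Proposition 4.6: if `B ∈ ℰ` is minimal and
does not connect to any loop, then `r(B, β) ∩ B = ∅` for every `β ∈ ℒ*(E)`; moreover,
every minimal `B' ∈ ℰ` contained in some relative range `r(B, δ)` also does not connect
to any loop. -/
theorem stmt_13 {V : Type*} {Λ : Type*} [Countable V] [Countable Λ]
    (G : LabeledGraph V Λ) [Countable G.Edge] (hS : G.Standing)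
    (Bset : Set V) (hB : G.MinimalSet Bset) (hnc : ¬ G.ConnectsToLoop Bset) :
    (∀ β : List Λ, G.IsLabel β → G.rel Bset β ∩ Bset = ∅) ∧
    (∀ (B' : Set V) (δ : List Λ), G.MinimalSet B' → G.IsLabel δ →
      B' ⊆ G.rel Bset δ → ¬ G.ConnectsToLoop B') :=
  stmt_13_general G Bset hB hnc
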